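/- arXiv:2211.14907 — 11 statements merged into one kernel-verified Lean document; each statement's English description precedes it below -/
import Mathlib

section
/- Let A_h > A_ℓ > 0 and φ > 0 be real numbers, and set p̂ := (A_h − 2A_ℓ)/(A_h − A_ℓ). For every p ∈ [0,1]: if p < p̂ then min{φ/(2·Ā(p)), λ(p)} = λ(p), and if p ≥ p̂ then min{φ/(2·Ā(p)), λ(p)} = φ/(2·Ā(p)). -/
/-- Lemma on the minimum of φ/(2·Ā(p)) and λ(p), split by the threshold
p̂ = (A_h − 2A_ℓ)/(A_h − A_ℓ). -/
theorem stmt_0 (Ah Al φ : ℝ) (hAl : 0 < Al) (hAh : Al < Ah) (hφ : 0 < φ)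
    (Abar lam : ℝ → ℝ)
    (hAbar : ∀ p, Abar p = p * Ah + (1 - p) * Al)
    (hlam : ∀ p, lam p =
      (φ / (2 * Ah ^ 2)) *
        (Real.sqrt ((1 - p) * Al) + Real.sqrt (p * Ah + (1 - p) * Al)) ^ 2)
    (phat : ℝ) (hphat : phat = (Ah - 2 * Al) / (Ah - Al)) :
    ∀ p ∈ Set.Icc (0 : ℝ) 1,
      (p < phat → min (φ / (2 * Abar p)) (lam p) = lam p) ∧
      (phat ≤ p → min (φ / (2 * Abar p)) (lam p) = φ / (2 * Abar p)) := by
  intro p hp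
  obtain ⟨hp0, hp1⟩ := hp
  have hAh0 : 0 < Ah := hAl.trans hAh
  have hd : 0 < Ah - Al := by linarith
  have h1p : (0:ℝ) ≤ 1 - p := by linarith
  have hsarg : 0 ≤ (1 - p) * Al := mul_nonneg h1p hAl.le
  have hAbarpos : 0 < p * Ah + (1 - p) * Al := by nlinarith
  set s := Real.sqrt ((1 - p) * Al) with hs
  set t := Real.sqrt (p * Ah + (1 - p) * Al) with ht
  have hsnn : 0 ≤ s := Real.sqrt_nonneg _
  have htnn : 0 ≤ t := Real.sqrt_nonneg _
  have hs2 : s ^ 2 = (1 - p) * Al := Real.sq_sqrt hsarg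
  have ht2 : t ^ 2 = p * Ah + (1 - p) * Al := Real.sq_sqrt hAbarpos.le
  have hstmul : s * t = Real.sqrt ((1 - p) * Al * (p * Ah + (1 - p) * Al)) :=
    (Real.sqrt_mul hsarg _).symm
  constructor
  · intro hlt
    rw [hphat, lt_div_iff₀ hd] at hlt
    have hp1' : p < 1 := by nlinarith
    have h1 : (1 - p) * Al * (p * Ah + (1 - p) * Al) ≤ ((1 - p) * (Ah - Al)) ^ 2 := by
      nlinarith [mul_nonneg (mul_nonneg h1p hAh0.le)
        (by linarith : 0 ≤ Ah - 2 * Al - p * (Ah - Al))]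
    have h2 : s * t ≤ (1 - p) * (Ah - Al) := by
      rw [hstmul]
      calc Real.sqrt _ ≤ Real.sqrt (((1 - p) * (Ah - Al)) ^ 2) := Real.sqrt_le_sqrt h1
        _ = (1 - p) * (Ah - Al) := Real.sqrt_sq (mul_nonneg h1p hd.le)
    have h3 : t * (s + t) ≤ Ah := by nlinarith
    have h3' := mul_self_le_mul_self (mul_nonneg htnn (add_nonneg hsnn htnn)) h3
    have h4 : (p * Ah + (1 - p) * Al) * (s + t) ^ 2 ≤ Ah ^ 2 := by
      calc (p * Ah + (1 - p) * Al) * (s + t) ^ 2 = t ^ 2 * (s + t) ^ 2 := by rw [ht2]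
        _ = (t * (s + t)) * (t * (s + t)) := by ring
        _ ≤ Ah * Ah := h3'
        _ = Ah ^ 2 := (sq Ah).symm
    have hle : lam p ≤ φ / (2 * Abar p) := by
      rw [hlam, hAbar]
      rw [div_mul_eq_mul_div, div_le_div_iff₀ (by positivity) (by positivity)]
      linarith [mul_le_mul_of_nonneg_left h4 hφ.le]
    exact min_eq_right hle
  · intro hge
    rw [hphat, div_le_iff₀ hd] at hge
    have h1 : ((1 - p) * (Ah - Al)) ^ 2 ≤ (1 - p) * Al * (p * Ah + (1 - p) * Al) := by
      nlinarith [mul_nonneg (mul_nonneg h1p hAh0.le)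
        (by linarith : 0 ≤ p * (Ah - Al) - (Ah - 2 * Al))]
    have h2 : (1 - p) * (Ah - Al) ≤ s * t := by
      rw [hstmul]
      calc (1 - p) * (Ah - Al) = Real.sqrt (((1 - p) * (Ah - Al)) ^ 2) :=
            (Real.sqrt_sq (mul_nonneg h1p hd.le)).symm
        _ ≤ _ := Real.sqrt_le_sqrt h1
    have h3 : Ah ≤ t * (s + t) := by nlinarith
    have h3' := mul_self_le_mul_self hAh0.le h3
    have h4 : Ah ^ 2 ≤ (p * Ah + (1 - p) * Al) * (s + t) ^ 2 := by
      calc Ah ^ 2 = Ah * Ah := sq Ah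
        _ ≤ (t * (s + t)) * (t * (s + t)) := h3'
        _ = t ^ 2 * (s + t) ^ 2 := by ring
        _ = _ := by rw [ht2]
    have hle : φ / (2 * Abar p) ≤ lam p := by
      rw [hlam, hAbar]
      rw [div_mul_eq_mul_div, div_le_div_iff₀ (by positivity) (by positivity)]
      linarith [mul_le_mul_of_nonneg_left h4 hφ.le]
    exact min_eq_left hle
end

section
/- Let A_h > 2A_ℓ > 0 and φ > 0 be real numbers, and set p̂ := (A_h − 2A_ℓ)/(A_h − A_ℓ). For every p ∈ [0,1] with p < p̂, one has max{φ/(2·Ā(p)), λ(p), φ(1−p)/(2A_ℓ)} = φ(1−p)/(2A_ℓ); that is, φ(1−p)/(2A_ℓ) ≥ φ/(2·Ā(p)) and φ(1−p)/(2A_ℓ) ≥ λ(p). -/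
/-- For p below the threshold p̂, the maximum of φ/(2·Ā(p)), λ(p), and
φ(1−p)/(2A_ℓ) is φ(1−p)/(2A_ℓ). -/
theorem stmt_1 (Ah Al φ : ℝ) (hAl : 0 < Al) (hAh : 2 * Al < Ah) (hφ : 0 < φ)
    (Abar lam : ℝ → ℝ)
    (hAbar : ∀ p, Abar p = p * Ah + (1 - p) * Al)
    (hlam : ∀ p, lam p =
      (φ / (2 * Ah ^ 2)) *
        (Real.sqrt ((1 - p) * Al) + Real.sqrt (p * Ah + (1 - p) * Al)) ^ 2)
    (phat : ℝ) (hphat : phat = (Ah - 2 * Al) / (Ah - Al)) :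
    ∀ p ∈ Set.Icc (0 : ℝ) 1, p < phat →
      max (max (φ / (2 * Abar p)) (lam p)) (φ * (1 - p) / (2 * Al))
        = φ * (1 - p) / (2 * Al) ∧
      φ / (2 * Abar p) ≤ φ * (1 - p) / (2 * Al) ∧
      lam p ≤ φ * (1 - p) / (2 * Al) := by
  intro p hp hpphat
  obtain ⟨hp0, hp1⟩ := hp
  have hAhAl : Al < Ah := by linarith
  have hAhpos : 0 < Ah := by linarith
  have hkey : p * (Ah - Al) ≤ Ah - 2 * Al := by
    have h := hpphat
    rw [hphat, lt_div_iff₀ (by linarith : (0:ℝ) < Ah - Al)] at h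
    linarith
  have hAbarpos : 0 < Abar p := by rw [hAbar]; nlinarith
  have h1p : 0 ≤ 1 - p := by linarith
  -- first inequality
  have hineq1 : φ / (2 * Abar p) ≤ φ * (1 - p) / (2 * Al) := by
    rw [div_le_div_iff₀ (by linarith) (by linarith)]
    rw [hAbar]
    nlinarith [mul_nonneg hp0 (sub_nonneg.mpr hkey)]
  -- second inequality
  have hineq2 : lam p ≤ φ * (1 - p) / (2 * Al) := by
    rw [hlam]
    set r1 := Real.sqrt ((1 - p) * Al) with hr1
    set r2 := Real.sqrt (p * Ah + (1 - p) * Al) with hr2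
    have hr1sq : r1 ^ 2 = (1 - p) * Al := Real.sq_sqrt (by positivity)
    have hr2sq : r2 ^ 2 = p * Ah + (1 - p) * Al := Real.sq_sqrt (by nlinarith)
    have hr1nn : 0 ≤ r1 := Real.sqrt_nonneg _
    have hr2nn : 0 ≤ r2 := Real.sqrt_nonneg _
    have hprod : r1 * r2 ≤ (1 - p) * (Ah - Al) := by
      rw [hr1, hr2, ← Real.sqrt_mul (by positivity)]
      have hsq : ((1 - p) * Al) * (p * Ah + (1 - p) * Al)
          ≤ ((1 - p) * (Ah - Al)) ^ 2 := by
        nlinarith [mul_nonneg h1p (mul_nonneg hAhpos.le (sub_nonneg.mpr hkey)),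
          mul_nonneg (mul_nonneg h1p h1p) (mul_nonneg hAhpos.le (sub_nonneg.mpr hkey))]
      calc Real.sqrt (((1 - p) * Al) * (p * Ah + (1 - p) * Al))
          ≤ Real.sqrt (((1 - p) * (Ah - Al)) ^ 2) := Real.sqrt_le_sqrt hsq
        _ = (1 - p) * (Ah - Al) := Real.sqrt_sq (by nlinarith)
    have hmain : Al * (r1 + r2) ^ 2 ≤ (1 - p) * Ah ^ 2 := by
      nlinarith [hprod, hr1sq, hr2sq]
    rw [div_mul_eq_mul_div, div_le_div_iff₀ (by positivity) (by linarith)]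
    nlinarith [hmain]
  exact ⟨max_eq_right (max_le hineq1 hineq2), hineq1, hineq2⟩
end

section
/- Let A_h > A_ℓ > 0 and φ > 0 be real numbers, and set p̂ := (A_h − 2A_ℓ)/(A_h − A_ℓ). The function p ↦ λ(p) is strictly increasing on the set {p ∈ [0,1] : p < p̂} and strictly decreasing on the set {p ∈ [0,1] : p > p̂}. -/
/-!
Up to the positive factor `φ / (2 A_h²)`, `λ` is the square of the nonnegative function
`g p = √u + √v` with `u = (1 - p) A_ℓ` and `v = A_ℓ + p (A_h - A_ℓ)`, so it suffices to find the sign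
of `g' = ((A_h - A_ℓ) √u - A_ℓ √v) / (2 √u √v)`. Multiplying by the conjugate
`(A_h - A_ℓ) √u + A_ℓ √v > 0` turns the numerator into
`(A_h - A_ℓ)² u - A_ℓ² v = A_ℓ A_h ((A_h - 2 A_ℓ) - p (A_h - A_ℓ))`, which is positive exactly when `p < p̂`.
-/

open Set

noncomputable def sqrtSum (a b p : ℝ) : ℝ :=
  √((1 - p) * a) + √(p * b + (1 - p) * a)

section

variable {a b : ℝ}

theorem sqrtSum_nonneg (p : ℝ) : 0 ≤ sqrtSum a b p := by
  unfold sqrtSum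
  positivity

theorem continuous_sqrtSum : Continuous (sqrtSum a b) := by
  unfold sqrtSum
  fun_prop

theorem hasDerivAt_sqrtSum (ha : 0 < a) (hab : a ≤ b) {p : ℝ} (hp : p ∈ Ioo 0 1) :
    ∃ c > 0, HasDerivAt (sqrtSum a b) (c * ((b - 2 * a) - p * (b - a))) p := by
  obtain ⟨hp0, hp1⟩ := hp
  have hu : 0 < (1 - p) * a := mul_pos (sub_pos.mpr hp1) ha
  have hv : 0 < p * b + (1 - p) * a := by nlinarith
  have hderiv : HasDerivAt (sqrtSum a b)
      (-a / (2 * √((1 - p) * a)) + (b - a) / (2 * √(p * b + (1 - p) * a))) p := by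
    have hu' : HasDerivAt (fun q : ℝ => (1 - q) * a) (-a) p := by
      simpa using ((hasDerivAt_id p).const_sub 1).mul_const a
    have hv' : HasDerivAt (fun q : ℝ => q * b + (1 - q) * a) (b - a) p :=
      (((hasDerivAt_id p).mul_const b).add hu').congr_deriv (by ring)
    exact (hu'.sqrt hu.ne').add (hv'.sqrt hv.ne')
  have hb : 0 < b := ha.trans_le hab
  have hsu : 0 < √((1 - p) * a) := Real.sqrt_pos.mpr hu
  have hsv : 0 < √(p * b + (1 - p) * a) := Real.sqrt_pos.mpr hv
  have hw : 0 < (b - a) * √((1 - p) * a) + a * √(p * b + (1 - p) * a) := by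
    have := sub_nonneg.mpr hab
    positivity
  refine ⟨a * b / (2 * √((1 - p) * a) * √(p * b + (1 - p) * a) *
    ((b - a) * √((1 - p) * a) + a * √(p * b + (1 - p) * a))), by positivity, ?_⟩
  have hconj : a * b * ((b - 2 * a) - p * (b - a)) =
      ((b - a) * √((1 - p) * a) - a * √(p * b + (1 - p) * a)) *
        ((b - a) * √((1 - p) * a) + a * √(p * b + (1 - p) * a)) := by
    linear_combination (-(b - a) ^ 2) * Real.sq_sqrt hu.le + a ^ 2 * Real.sq_sqrt hv.le
  refine hderiv.congr_deriv ?_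
  rw [div_mul_eq_mul_div, hconj, mul_div_mul_right _ _ hw.ne']
  field_simp
  ring

theorem strictMonoOn_sqrtSum (ha : 0 < a) (hab : a < b) :
    StrictMonoOn (sqrtSum a b) {p ∈ Icc 0 1 | p < (b - 2 * a) / (b - a)} := by
  refine strictMonoOn_of_deriv_pos ((convex_Icc 0 1).inter (convex_Iio _))
    continuous_sqrtSum.continuousOn fun p hp => ?_
  rw [interior_inter, interior_Icc, interior_Iio] at hp
  obtain ⟨c, hc, hderiv⟩ := hasDerivAt_sqrtSum ha hab.le hp.1
  rw [hderiv.deriv]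
  have := (lt_div_iff₀ (sub_pos.mpr hab)).mp hp.2
  exact mul_pos hc (by linarith)

theorem strictAntiOn_sqrtSum (ha : 0 < a) (hab : a < b) :
    StrictAntiOn (sqrtSum a b) {p ∈ Icc 0 1 | (b - 2 * a) / (b - a) < p} := by
  refine strictAntiOn_of_deriv_neg ((convex_Icc 0 1).inter (convex_Ioi _))
    continuous_sqrtSum.continuousOn fun p hp => ?_
  rw [interior_inter, interior_Icc, interior_Ioi] at hp
  obtain ⟨c, hc, hderiv⟩ := hasDerivAt_sqrtSum ha hab.le hp.1
  rw [hderiv.deriv]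
  have := (div_lt_iff₀ (sub_pos.mpr hab)).mp hp.2
  exact mul_neg_of_pos_of_neg hc (by linarith)

end

theorem StrictMonoOn.const_mul_sq {α : Type*} [Preorder α] {f : α → ℝ} {s : Set α} {c : ℝ}
    (hf : StrictMonoOn f s) (hf0 : ∀ x ∈ s, 0 ≤ f x) (hc : 0 < c) :
    StrictMonoOn (fun x => c * f x ^ 2) s := fun x hx _ hy hxy =>
  mul_lt_mul_of_pos_left (pow_lt_pow_left₀ (hf hx hy hxy) (hf0 x hx) two_ne_zero) hc

theorem StrictAntiOn.const_mul_sq {α : Type*} [Preorder α] {f : α → ℝ} {s : Set α} {c : ℝ}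
    (hf : StrictAntiOn f s) (hf0 : ∀ x ∈ s, 0 ≤ f x) (hc : 0 < c) :
    StrictAntiOn (fun x => c * f x ^ 2) s := fun _ hx y hy hxy =>
  mul_lt_mul_of_pos_left (pow_lt_pow_left₀ (hf hx hy hxy) (hf0 y hy) two_ne_zero) hc

/-- λ is strictly increasing on {p ∈ [0,1] : p < p̂} and strictly decreasing on
{p ∈ [0,1] : p > p̂}. -/
theorem stmt_2 (Ah Al φ : ℝ) (hAl : 0 < Al) (hAh : Al < Ah) (hφ : 0 < φ)
    (lam : ℝ → ℝ)
    (hlam : ∀ p, lam p =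
      (φ / (2 * Ah ^ 2)) *
        (Real.sqrt ((1 - p) * Al) + Real.sqrt (p * Ah + (1 - p) * Al)) ^ 2)
    (phat : ℝ) (hphat : phat = (Ah - 2 * Al) / (Ah - Al)) :
    StrictMonoOn lam {p ∈ Set.Icc (0 : ℝ) 1 | p < phat} ∧
    StrictAntiOn lam {p ∈ Set.Icc (0 : ℝ) 1 | phat < p} := by
  have hlam' : lam = fun p => φ / (2 * Ah ^ 2) * sqrtSum Al Ah p ^ 2 := funext hlam
  have hc : 0 < φ / (2 * Ah ^ 2) := by
    have := hAl.trans hAh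
    positivity
  subst hlam' hphat
  exact ⟨(strictMonoOn_sqrtSum hAl hAh).const_mul_sq (fun p _ => sqrtSum_nonneg p) hc,
    (strictAntiOn_sqrtSum hAl hAh).const_mul_sq (fun p _ => sqrtSum_nonneg p) hc⟩
end

section
/- Let A_h > A_ℓ > 0, φ > 0, 0 < p < 1, and let c be a real number satisfying φ/(2A_h) ≤ c < min{φ/(2·Ā(p)), λ(p)}. Then p·φ + (1−p)·√(c·φ·A_ℓ/2) > √(c·φ·Ā(p)/2); that is, the fully revealing signaling policy gives player A a strictly higher payoff than the no-signaling benchmark. -/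
/-!
Write `s = √(cφ/2)`, `a = √Ā(p)`, `b = √((1-p)A_ℓ)` and `q = √(1-p)`, so that the no-signaling
payoff is `s a` and the full-revelation payoff is `pφ + (1-p) s √A_ℓ`. The upper bound
`c < φ/(2Ā)` says `s a < φ/2` and `c < λ(p)` says `s A_h < (φ/2)(a + b)`. Since
`a² - b² = p A_h`, the second bound gives `s (a - b) < pφ/2`; since `b = q √A_ℓ`, the remaining
gap is `s b - (1-p) s √A_ℓ = s b (1 - q) ≤ (φ/2) p`, because `1 - p ≤ q`. Adding the two
estimates gives the claim.
-/

open Real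

lemma sqrt_mul_sqrt_lt_of_lt {c φ x y : ℝ} (hφ : 0 < φ) (hx : 0 < x) (hy : 0 < y)
    (hc : c < φ / (2 * x) * y ^ 2) :
    √(c * φ / 2) * √x < φ / 2 * y := by
  rw [← sqrt_mul' _ hx.le, sqrt_lt' (by positivity)]
  rw [div_mul_eq_mul_div, lt_div_iff₀ (by positivity)] at hc
  nlinarith

lemma one_sub_sqrt_one_sub_le {p : ℝ} (hp0 : 0 ≤ p) : 1 - √(1 - p) ≤ p := by
  have : 1 - p ≤ √(1 - p) := le_sqrt_self_iff.mpr (by linarith)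
  linarith

lemma mul_sub_lt_of_mul_lt_of_sq_sub_sq {s a b d φ : ℝ} (hab : 0 ≤ a + b)
    (hsq : a ^ 2 - b ^ 2 = d) (h : s * d < φ * (a + b)) :
    s * (a - b) < φ := by
  have : s * (a - b) * (a + b) < φ * (a + b) := by
    rw [show s * (a - b) * (a + b) = s * (a ^ 2 - b ^ 2) by ring, hsq]
    exact h
  exact lt_of_mul_lt_mul_right this hab

lemma mul_sqrt_mean_lt_of_bounds {s Ah Al φ p : ℝ} (hs : 0 ≤ s) (hAh : 0 ≤ Ah) (hAl : 0 ≤ Al)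
    (hp0 : 0 < p) (hp1 : p ≤ 1)
    (h_pool : s * √(p * Ah + (1 - p) * Al) < φ / 2)
    (h_high : s * Ah < φ / 2 * (√((1 - p) * Al) + √(p * Ah + (1 - p) * Al))) :
    s * √(p * Ah + (1 - p) * Al) < p * φ + (1 - p) * (s * √Al) := by
  set a := √(p * Ah + (1 - p) * Al)
  set b := √((1 - p) * Al)
  set q := √(1 - p)
  have hq2 : q ^ 2 = 1 - p := sq_sqrt (by linarith)
  have hb_eq : b = q * √Al := sqrt_mul (by linarith) Al
  have hb_le : b ≤ a := sqrt_le_sqrt (by nlinarith)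
  have h_low_gap : s * (a - b) < p * φ / 2 := by
    refine mul_sub_lt_of_mul_lt_of_sq_sub_sq (d := p * Ah) (by positivity)
      (by rw [sq_sqrt (by positivity), sq_sqrt (by nlinarith)]; ring) ?_
    calc s * (p * Ah) = p * (s * Ah) := by ring
      _ < p * (φ / 2 * (b + a)) := by gcongr
      _ = p * φ / 2 * (a + b) := by ring
  have h_high_gap : s * b - (1 - p) * (s * √Al) ≤ p * φ / 2 := by
    have hrw : s * b - (1 - p) * (s * √Al) = s * b * (1 - q) := by rw [hb_eq, ← hq2]; ring
    have hsb : s * b ≤ φ / 2 := (mul_le_mul_of_nonneg_left hb_le hs).trans h_pool.le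
    rw [hrw]
    calc s * b * (1 - q) ≤ φ / 2 * p :=
          mul_le_mul hsb (one_sub_sqrt_one_sub_le hp0.le)
            (sub_nonneg.mpr (sqrt_le_one.mpr (by linarith)))
            ((mul_nonneg hs (sqrt_nonneg _)).trans hsb)
      _ = p * φ / 2 := by ring
  linarith

theorem stmt_7_general (Ah Al φ p c : ℝ) (hAl : 0 < Al) (hAh : Al < Ah) (hφ : 0 < φ)
    (hp0 : 0 < p) (hp1 : p < 1)
    (hc_ub : c < min (φ / (2 * (p * Ah + (1 - p) * Al)))
      ((φ / (2 * Ah ^ 2)) *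
        (Real.sqrt ((1 - p) * Al) + Real.sqrt (p * Ah + (1 - p) * Al)) ^ 2)) :
    Real.sqrt (c * φ * (p * Ah + (1 - p) * Al) / 2)
      < p * φ + (1 - p) * Real.sqrt (c * φ * Al / 2) := by
  obtain ⟨hc_pool, hc_high⟩ := lt_min_iff.mp hc_ub
  have hAh0 : 0 < Ah := hAl.trans hAh
  have hA : 0 < p * Ah + (1 - p) * Al := by nlinarith
  have hab : 0 < √((1 - p) * Al) + √(p * Ah + (1 - p) * Al) := by
    have := sqrt_pos.mpr hA
    positivity
  have h_pool := sqrt_mul_sqrt_lt_of_lt hφ hA one_pos (by simpa using hc_pool)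
  have h_high := sqrt_mul_sqrt_lt_of_lt hφ (by positivity) hab hc_high
  rw [sqrt_sq hAh0.le] at h_high
  rw [show c * φ * (p * Ah + (1 - p) * Al) / 2 = c * φ / 2 * (p * Ah + (1 - p) * Al) by ring,
    show c * φ * Al / 2 = c * φ / 2 * Al by ring, sqrt_mul' _ hA.le, sqrt_mul' _ hAl.le]
  exact mul_sqrt_mean_lt_of_bounds (sqrt_nonneg _) hAh0.le hAl.le hp0 hp1.le
    (by simpa using h_pool) h_high

/-- If φ/(2A_h) ≤ c < min{φ/(2Ā(p)), λ(p)}, full revelation strictly beats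
the no-signaling benchmark. -/
theorem stmt_7 (Ah Al φ p c : ℝ) (hAl : 0 < Al) (hAh : Al < Ah) (hφ : 0 < φ)
    (hp0 : 0 < p) (hp1 : p < 1)
    (hc_lb : φ / (2 * Ah) ≤ c)
    (hc_ub : c < min (φ / (2 * (p * Ah + (1 - p) * Al)))
      ((φ / (2 * Ah ^ 2)) *
        (Real.sqrt ((1 - p) * Al) + Real.sqrt (p * Ah + (1 - p) * Al)) ^ 2)) :
    Real.sqrt (c * φ * (p * Ah + (1 - p) * Al) / 2)
      < p * φ + (1 - p) * Real.sqrt (c * φ * Al / 2) :=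
  stmt_7_general Ah Al φ p c hAl hAh hφ hp0 hp1 hc_ub
end

section
/- Let A_h > A_ℓ > 0, φ > 0, c > 0, and 0 < p < 1. Then the function Π : [0,1] → ℝ defined by Π(q) := √(c·φ·(p + q(1−p))·(p·A_h + q(1−p)·A_ℓ)/2) + (1−p)(1−q)·√(c·φ·A_ℓ/2) is strictly increasing on [0,1]; consequently, for every q ∈ [0,1), Π(q) < √(c·φ·(p·A_h + (1−p)·A_ℓ)/2). -/
/-!
With `s = q (1 - p)`, `r = p A_h / A_ℓ` and `w = √(cφA_ℓ/2)` one has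
`Π(q) = w (√((p + s)(r + s)) - s) + w (1 - p)`. Since `r ≠ p`, AM-GM is strict, so the geometric
mean `G(s) = √((p + s)(r + s))` stays below `(p + r)/2 + s`; then
`G(t)² - G(s)² = (t - s)(p + r + s + t)` forces `G(t) - G(s) > t - s`.
-/

open Real

lemma sqrt_mul_lt_add_div_two {x y : ℝ} (hx : 0 ≤ x) (hy : 0 ≤ y) (hxy : x ≠ y) :
    √(x * y) < (x + y) / 2 := by
  have hsq : 0 < (x - y) ^ 2 := by have := sub_ne_zero.2 hxy; positivity
  have hsum : 0 < x + y := by rcases hxy.lt_or_gt with h | h <;> linarith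
  rw [sqrt_lt' (by positivity)]
  nlinarith

lemma strictMonoOn_sqrt_mul_add_sub {a b : ℝ} (hab : a ≠ b) :
    StrictMonoOn (fun s => √((a + s) * (b + s)) - s) (Set.Ici (max (-a) (-b))) := by
  intro s hs t ht hst
  simp only [Set.mem_Ici, max_le_iff] at hs ht
  have hab' (u : ℝ) : a + u ≠ b + u := by simpa using hab
  have hS := sqrt_mul_lt_add_div_two (by linarith) (by linarith) (hab' s)
  have hT := sqrt_mul_lt_add_div_two (by linarith) (by linarith) (hab' t)
  have hT0 : 0 < √((a + t) * (b + t)) := sqrt_pos.2 (by nlinarith)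
  have hdiff : √((a + t) * (b + t)) ^ 2 - √((a + s) * (b + s)) ^ 2
      = (t - s) * (a + b + s + t) := by
    rw [sq_sqrt (by nlinarith), sq_sqrt (by nlinarith)]; ring
  have := sqrt_nonneg ((a + s) * (b + s))
  dsimp only
  nlinarith

lemma sqrt_mul_add_mul_add_div_two {K A B p s : ℝ} (hK : 0 ≤ K) (hB : 0 < B) :
    √(K * (p + s) * (p * A + s * B) / 2) = √(K * B / 2) * √((p + s) * (p * A / B + s)) := by
  rw [← sqrt_mul (by positivity)]
  congr 1
  field_simp

/-- Pi(q) = √(cφ(p+q(1−p))(pA_h+q(1−p)A_ℓ)/2) + (1−p)(1−q)√(cφA_ℓ/2) is strictly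
increasing on [0,1]; hence Pi(q) < Pi(1) = √(cφĀ(p)/2) for q ∈ [0,1). -/
theorem stmt_10 (Ah Al φ c p : ℝ) (hAl : 0 < Al) (hAh : Al < Ah) (hφ : 0 < φ)
    (hc : 0 < c) (hp0 : 0 < p) (hp1 : p < 1)
    (Pi : ℝ → ℝ)
    (hPi : ∀ q, Pi q =
      Real.sqrt (c * φ * (p + q * (1 - p)) * (p * Ah + q * (1 - p) * Al) / 2)
        + (1 - p) * (1 - q) * Real.sqrt (c * φ * Al / 2)) :
    StrictMonoOn Pi (Set.Icc (0 : ℝ) 1) ∧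
    ∀ q ∈ Set.Ico (0 : ℝ) 1,
      Pi q < Real.sqrt (c * φ * (p * Ah + (1 - p) * Al) / 2) := by
  set w := √(c * φ * Al / 2)
  set g := fun s => √((p + s) * (p * Ah / Al + s)) - s
  have hr : p < p * Ah / Al := by rw [lt_div_iff₀ hAl]; nlinarith
  have hg := strictMonoOn_sqrt_mul_add_sub hr.ne
  have hPi' (q : ℝ) : Pi q = w * g (q * (1 - p)) + w * (1 - p) := by
    rw [hPi, sqrt_mul_add_mul_add_div_two (by positivity) hAl]; ring
  have hmono : StrictMonoOn Pi (Set.Icc 0 1) := by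
    intro x hx y hy hxy
    have hmem {q : ℝ} (hq : q ∈ Set.Icc 0 1) :
        q * (1 - p) ∈ Set.Ici (max (-p) (-(p * Ah / Al))) :=
      (max_le (by linarith) (by linarith)).trans (mul_nonneg hq.1 (by linarith))
    rw [hPi' x, hPi' y]
    gcongr
    exact hg (hmem hx) (hmem hy) (mul_lt_mul_of_pos_right hxy (by linarith))
  refine ⟨hmono, fun q hq => ?_⟩
  have hPi1 : Pi 1 = √(c * φ * (p * Ah + (1 - p) * Al) / 2) := by
    simp only [hPi, one_mul, sub_self, mul_zero, zero_mul, add_zero, add_sub_cancel, mul_one]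
  exact hPi1 ▸ hmono ⟨hq.1, hq.2.le⟩ ⟨zero_le_one, le_rfl⟩ hq.2
end

section
/- Let A_h > A_ℓ > 0, φ > 0, 0 < p < 1, and let c satisfy φ/(2A_h) ≤ c < min{φ/(2·Ā(p)), λ(p)}. Let q₁* := (p/(1−p))·(2c·A_h − φ)/(φ − 2c·A_ℓ). Then φ·(p + (1−p)·q₁*) + (1−p)(1−q₁*)·√(c·φ·A_ℓ/2) > √(c·φ·Ā(p)/2); that is, the signaling policy q₁* strictly outperforms the no-signaling benchmark. -/
private lemma aux_half (c φ Ab : ℝ) (hφ : 0 < φ) (hc1' : c * (2 * Ab) < φ) :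
    c * φ * Ab / 2 < (φ / 2) ^ 2 := by
  nlinarith [mul_lt_mul_of_pos_right hc1' hφ]

private lemma aux_lower (c φ Ah A : ℝ) (hφ : 0 < φ) (hA : 0 < A)
    (h1 : φ ≤ c * (2 * Ah)) : φ ^ 2 * A ≤ 2 * (c * φ * A) * Ah := by
  nlinarith [mul_le_mul_of_nonneg_right h1 (mul_pos hφ hA).le]

private lemma aux_star (S T φ : ℝ) (hS0 : 0 < S) (hT0 : 0 < T) (hφ : 0 < φ)
    (h1 : 2 * S < φ) (h2 : φ < 2 * (S + T)) :
    φ ^ 2 + 4 * S * T < 4 * φ * S + 4 * φ * T := by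
  nlinarith [mul_pos hφ (show 0 < 2 * (S + T) - φ by linarith),
    mul_pos hT0 (show 0 < φ - 2 * S by linarith), mul_pos hφ hS0]

private lemma aux_target (S T φ : ℝ) (hTS : T < S)
    (hstar : φ ^ 2 + 4 * S * T < 4 * φ * S + 4 * φ * T) :
    φ ^ 2 * S - 4 * T ^ 2 * S < 4 * φ * (S ^ 2 - T ^ 2) + (φ ^ 2 - 4 * S ^ 2) * T := by
  nlinarith [mul_pos (sub_pos.2 hTS)
    (show 0 < 4 * φ * S + 4 * φ * T - φ ^ 2 - 4 * S * T by linarith)]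

/-- Case (1) of the main theorem: under φ/(2A_h) ≤ c < min{φ/(2Ā(p)), λ(p)},
the signaling policy q₁* strictly outperforms the no-signaling benchmark. -/
theorem stmt_11 (Ah Al φ p c : ℝ) (hAl : 0 < Al) (hAh : Al < Ah) (hφ : 0 < φ)
    (hp0 : 0 < p) (hp1 : p < 1)
    (hc_lb : φ / (2 * Ah) ≤ c)
    (hc_ub : c < min (φ / (2 * (p * Ah + (1 - p) * Al)))
      ((φ / (2 * Ah ^ 2)) *
        (Real.sqrt ((1 - p) * Al) + Real.sqrt (p * Ah + (1 - p) * Al)) ^ 2))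
    (q₁ : ℝ) (hq₁ : q₁ = (p / (1 - p)) * (2 * c * Ah - φ) / (φ - 2 * c * Al)) :
    Real.sqrt (c * φ * (p * Ah + (1 - p) * Al) / 2)
      < φ * (p + (1 - p) * q₁)
        + (1 - p) * (1 - q₁) * Real.sqrt (c * φ * Al / 2) := by
  have hAh0 : 0 < Ah := lt_trans hAl hAh
  have hp' : 0 < 1 - p := by linarith
  have hc0 : 0 < c := lt_of_lt_of_le (by positivity) hc_lb
  obtain ⟨Ab, hAb⟩ : ∃ x : ℝ, x = p * Ah + (1 - p) * Al := ⟨_, rfl⟩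
  rw [← hAb] at hc_ub ⊢
  have hAb0 : 0 < Ab := by rw [hAb]; positivity
  have hAbAl : Al < Ab := by
    have := mul_pos hp0 (sub_pos.2 hAh)
    rw [hAb]; linarith [this]
  have hAbAh : Ab < Ah := by
    have := mul_pos hp' (sub_pos.2 hAh)
    rw [hAb]; linarith [this]
  have hc1 : c < φ / (2 * Ab) := lt_of_lt_of_le hc_ub (min_le_left _ _)
  have hclam : c < (φ / (2 * Ah ^ 2)) * (Real.sqrt ((1 - p) * Al) + Real.sqrt Ab) ^ 2 :=
    lt_of_lt_of_le hc_ub (min_le_right _ _)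
  obtain ⟨w, hwdef⟩ : ∃ x : ℝ, x = Real.sqrt ((1 - p) * Al) := ⟨_, rfl⟩
  obtain ⟨u, hudef⟩ : ∃ x : ℝ, x = Real.sqrt Ab := ⟨_, rfl⟩
  obtain ⟨v, hvdef⟩ : ∃ x : ℝ, x = Real.sqrt Al := ⟨_, rfl⟩
  obtain ⟨h, hhdef⟩ : ∃ x : ℝ, x = Real.sqrt Ah := ⟨_, rfl⟩
  rw [← hwdef, ← hudef] at hclam
  have hw0 : 0 ≤ w := hwdef ▸ Real.sqrt_nonneg _
  have hu0 : 0 < u := hudef ▸ Real.sqrt_pos.2 hAb0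
  have hv0 : 0 < v := hvdef ▸ Real.sqrt_pos.2 hAl
  have hh0 : 0 < h := hhdef ▸ Real.sqrt_pos.2 hAh0
  have hu2 : u ^ 2 = Ab := hudef ▸ Real.sq_sqrt hAb0.le
  have hv2 : v ^ 2 = Al := hvdef ▸ Real.sq_sqrt hAl.le
  have hh2 : h ^ 2 = Ah := hhdef ▸ Real.sq_sqrt hAh0.le
  have hwv : w < v := by
    rw [hwdef, hvdef]
    exact Real.sqrt_lt_sqrt (by positivity) (by linarith [mul_pos hp0 hAl])
  -- from the lower bound on c : φ ≤ 2 c Ah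
  have h1 : φ ≤ c * (2 * Ah) := (div_le_iff₀ (by positivity)).1 hc_lb
  -- from c < λ : Ah < (w+u)^2
  have h2 : c * (2 * Ah ^ 2) < φ * (w + u) ^ 2 := by
    rw [div_mul_eq_mul_div] at hclam
    exact (lt_div_iff₀ (by positivity)).1 hclam
  have hAhX : Ah < (w + u) ^ 2 := by
    refine lt_of_mul_lt_mul_left ?_ hφ.le
    linarith [mul_le_mul_of_nonneg_right h1 hAh0.le]
  have hhwu : h < w + u := by
    rw [hhdef]
    exact (Real.sqrt_lt' (by linarith)).2 hAhX
  obtain ⟨S, hSdef⟩ : ∃ x : ℝ, x = Real.sqrt (c * φ * Ab / 2) := ⟨_, rfl⟩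
  obtain ⟨T, hTdef⟩ : ∃ x : ℝ, x = Real.sqrt (c * φ * Al / 2) := ⟨_, rfl⟩
  rw [← hSdef, ← hTdef]
  have hS0 : 0 < S := hSdef ▸ Real.sqrt_pos.2 (by positivity)
  have hT0 : 0 < T := hTdef ▸ Real.sqrt_pos.2 (by positivity)
  have hS2 : S ^ 2 = c * φ * Ab / 2 := hSdef ▸ Real.sq_sqrt (by positivity)
  have hT2 : T ^ 2 = c * φ * Al / 2 := hTdef ▸ Real.sq_sqrt (by positivity)
  have hTS : T < S := by
    rw [hSdef, hTdef]
    exact Real.sqrt_lt_sqrt (by positivity)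
      (by linarith [mul_lt_mul_of_pos_left hAbAl (mul_pos hc0 hφ)])
  -- upper bound : 2 S < φ
  have hc1' : c * (2 * Ab) < φ := (lt_div_iff₀ (by positivity)).1 hc1
  have hShalf : 2 * S < φ := by
    have hlt : S < φ / 2 := by
      rw [hSdef]
      exact (Real.sqrt_lt' (by positivity)).2 (aux_half c φ Ab hφ hc1')
    linarith
  -- lower bounds : φ u ≤ 2 S h and φ v ≤ 2 T h
  have hSb : φ * u ≤ 2 * S * h := by
    have e0 : (φ * u) ^ 2 = φ ^ 2 * Ab := by rw [mul_pow, hu2]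
    have e1 : (2 * S * h) ^ 2 = 2 * (c * φ * Ab) * Ah := by
      rw [show (2 * S * h) ^ 2 = 4 * S ^ 2 * h ^ 2 by ring, hS2, hh2]; ring
    have hsq : (φ * u) ^ 2 ≤ (2 * S * h) ^ 2 := by
      rw [e0, e1]; exact aux_lower c φ Ah Ab hφ hAb0 h1
    have hle := Real.sqrt_le_sqrt hsq
    rwa [Real.sqrt_sq (by positivity), Real.sqrt_sq (by positivity)] at hle
  have hTb : φ * v ≤ 2 * T * h := by
    have e0 : (φ * v) ^ 2 = φ ^ 2 * Al := by rw [mul_pow, hv2]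
    have e1 : (2 * T * h) ^ 2 = 2 * (c * φ * Al) * Ah := by
      rw [show (2 * T * h) ^ 2 = 4 * T ^ 2 * h ^ 2 by ring, hT2, hh2]; ring
    have hsq : (φ * v) ^ 2 ≤ (2 * T * h) ^ 2 := by
      rw [e0, e1]; exact aux_lower c φ Ah Al hφ hAl h1
    have hle := Real.sqrt_le_sqrt hsq
    rwa [Real.sqrt_sq (by positivity), Real.sqrt_sq (by positivity)] at hle
  have hφST : φ < 2 * (S + T) := by
    have hmul : φ * h < (2 * (S + T)) * h := by
      have := mul_lt_mul_of_pos_left (show h < u + v by linarith) hφ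
      linarith [hSb, hTb, this]
    exact lt_of_mul_lt_mul_right hmul hh0.le
  have hstar := aux_star S T φ hS0 hT0 hφ hShalf hφST
  have target' := aux_target S T φ hTS hstar
  have h1' : c * φ * Al = 2 * T ^ 2 := by rw [hT2]; ring
  have h2' : c * φ * Ab = 2 * S ^ 2 := by rw [hS2]; ring
  have hden : 0 < φ - 2 * c * Al := by
    linarith [mul_lt_mul_of_pos_left hAbAl hc0, hc1']
  have e : φ * ((2 * c * p * φ * (Ah - Al) + (φ - 2 * c * Ab) * T) - S * (φ - 2 * c * Al))
      = (4 * φ * (S ^ 2 - T ^ 2) + (φ ^ 2 - 4 * S ^ 2) * T) - (φ ^ 2 * S - 4 * T ^ 2 * S) := by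
    linear_combination (2 * φ - 2 * T) * h2' + (2 * S - 2 * φ) * h1' - 2 * c * φ ^ 2 * hAb
  have key : S * (φ - 2 * c * Al) < 2 * c * p * φ * (Ah - Al) + (φ - 2 * c * Ab) * T := by
    have hpos : 0 < φ * ((2 * c * p * φ * (Ah - Al) + (φ - 2 * c * Ab) * T)
        - S * (φ - 2 * c * Al)) := by rw [e]; linarith
    have h0 : φ * 0 < φ * ((2 * c * p * φ * (Ah - Al) + (φ - 2 * c * Ab) * T)
        - S * (φ - 2 * c * Al)) := by rwa [mul_zero]
    have := lt_of_mul_lt_mul_left h0 hφ.le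
    linarith
  have expand : φ * (p + (1 - p) * q₁) + (1 - p) * (1 - q₁) * T
      = (2 * c * p * φ * (Ah - Al) + (φ - 2 * c * Ab) * T) / (φ - 2 * c * Al) := by
    rw [hq₁, hAb]
    field_simp
    ring
  rw [expand, lt_div_iff₀ hden]
  exact key
end

section
/- Let p and q be real numbers with 0 < p ≤ 1 and 0 ≤ q < 1. Then √(q·(p + q(1−p))) + (1−q)·√(1−p) < 1, with equality holding in the corresponding non-strict inequality exactly when q = 1. -/
lemma stmt_12_key (p q : ℝ) (hp0 : 0 < p) (hp1 : p ≤ 1) (hq0 : 0 ≤ q) (hq1 : q < 1) :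
    Real.sqrt (q * (p + q * (1 - p))) + (1 - q) * Real.sqrt (1 - p) < 1 := by
  set s := Real.sqrt (1 - p) with hs
  have hs0 : 0 ≤ s := Real.sqrt_nonneg _
  have hs2 : s ^ 2 = 1 - p := Real.sq_sqrt (by linarith)
  have hs1 : s < 1 := by
    nlinarith [hs2]
  have hy : (1 - q) * s < 1 :=
    lt_of_le_of_lt (by nlinarith : (1 - q) * s ≤ s) hs1
  have hlt : Real.sqrt (q * (p + q * (1 - p))) < 1 - (1 - q) * s := by
    rw [Real.sqrt_lt' (by linarith)]
    have h1 : 0 < (1 - s) ^ 2 := pow_pos (by linarith) 2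
    have hdiff : (1 - (1 - q) * s) ^ 2 - q * (p + q * (1 - p)) = (1 - q) * (1 - s) ^ 2 := by
      linear_combination (q * (q - 1)) * hs2
    nlinarith [mul_pos (by linarith : (0:ℝ) < 1 - q) h1]
  linarith

/-- For 0 < p ≤ 1 and 0 ≤ q < 1, √(q(p + q(1−p))) + (1−q)√(1−p) < 1; equality in
the non-strict inequality holds exactly at q = 1. -/
theorem stmt_12 (p q : ℝ) (hp0 : 0 < p) (hp1 : p ≤ 1) (hq0 : 0 ≤ q) (hq1 : q < 1) :
    Real.sqrt (q * (p + q * (1 - p))) + (1 - q) * Real.sqrt (1 - p) < 1 ∧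
    ∀ q' : ℝ, 0 ≤ q' → q' ≤ 1 →
      (Real.sqrt (q' * (p + q' * (1 - p))) + (1 - q') * Real.sqrt (1 - p) = 1
        ↔ q' = 1) := by
  refine ⟨stmt_12_key p q hp0 hp1 hq0 hq1, fun q' hq'0 hq'1 => ?_⟩
  constructor
  · intro h
    by_contra hne
    have hlt : q' < 1 := lt_of_le_of_ne hq'1 hne
    exact absurd h (ne_of_lt (stmt_12_key p q' hp0 hp1 hq'0 hlt))
  · rintro rfl
    simp
end

section
/- Let A_h > A_ℓ > 0, φ > 0, 0 < p < 1, and let c > 0 satisfy 2c·A_h > φ and 2c·A_ℓ < φ. Set K := √(c·φ·A_ℓ/2), q₁* := (p/(1−p))·(2c·A_h − φ)/(φ − 2c·A_ℓ), and f_p := p/(√(1−p) − (1−p)). Then φ·(p + (1−p)·q₁*) + (1−p)(1−q₁*)·K > p·φ + √(1−p)·K if and only if f_p > ((φ − 2c·A_ℓ)/(2c·A_h − φ)) · K/(φ − K). -/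
/-- Case (2) benefit condition: the policy q₁* beats the intermediate-cost
no-signaling benchmark iff f_p > ((φ−2cA_ℓ)/(2cA_h−φ))·K/(φ−K). -/
theorem stmt_13 (Ah Al φ p c : ℝ) (hAl : 0 < Al) (hAh : Al < Ah) (hφ : 0 < φ)
    (hp0 : 0 < p) (hp1 : p < 1) (hc0 : 0 < c)
    (hch : φ < 2 * c * Ah) (hcl : 2 * c * Al < φ)
    (K : ℝ) (hK : K = Real.sqrt (c * φ * Al / 2))
    (q₁ : ℝ) (hq₁ : q₁ = (p / (1 - p)) * (2 * c * Ah - φ) / (φ - 2 * c * Al))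
    (fp : ℝ) (hfp : fp = p / (Real.sqrt (1 - p) - (1 - p))) :
    (p * φ + Real.sqrt (1 - p) * K
        < φ * (p + (1 - p) * q₁) + (1 - p) * (1 - q₁) * K)
      ↔ ((φ - 2 * c * Al) / (2 * c * Ah - φ)) * (K / (φ - K)) < fp := by
  have h1p : (0:ℝ) < 1 - p := by linarith
  have hB : 0 < φ - 2*c*Al := by linarith
  have hA : 0 < 2*c*Ah - φ := by linarith
  set s := Real.sqrt (1-p) with hs
  have hs0 : 0 < s := Real.sqrt_pos.mpr h1p
  have hs2 : s^2 = 1-p := Real.sq_sqrt h1p.le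
  have hs1 : s < 1 := by nlinarith
  have hE : 0 < s - (1-p) := by nlinarith
  have hK0 : 0 < K := by rw [hK]; exact Real.sqrt_pos.mpr (by positivity)
  have hK2 : K^2 = c*φ*Al/2 := by rw [hK]; exact Real.sq_sqrt (by positivity)
  have hKφ : K < φ := by nlinarith
  have hq : q₁ * ((1-p)*(φ - 2*c*Al)) = p * (2*c*Ah - φ) := by
    rw [hq₁]; field_simp
  subst hfp
  rw [div_mul_div_comm, div_lt_div_iff₀ (mul_pos hA (by linarith)) hE]
  constructor
  · intro h; nlinarith [mul_pos hE hK0, mul_pos hB hK0]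
  · intro h; nlinarith [mul_pos hE hK0, mul_pos hB hK0]
end

section
/- Let A_ℓ > 0, φ > 0, 0 < p < 1, and let c > 0 satisfy 2c·A_ℓ < φ. Set K := √(c·φ·A_ℓ/2), q₃* := (p/(1−p))·(2c·A_ℓ)/(φ − 2c·A_ℓ), and f_p := p/(√(1−p) − (1−p)). Then φ·(p + (1−p)·q₃*) + (1−p)(1−q₃*)·K > p·φ + √(1−p)·K if and only if f_p > (1/2)·√(φ/(2c·A_ℓ)) · (φ − 2c·A_ℓ)/(φ − K). -/
/-!
Writing `s = √(1 - p)` and `u = (1 - p) q₃*`, the gain of the signaling policy over the benchmark is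
`u (φ - K) - (s - (1 - p)) K`, and `s - (1 - p) > 0` because `√x > x` on `(0, 1)`.
Since `2 c A_ℓ = 4 K² / φ`, we have `√(φ / (2 c A_ℓ)) = φ / (2 K)` and
`u = 4 p K² / (φ (φ - 2 c A_ℓ))`, so the threshold on the right equals `p K / (u (φ - K))`;
comparing `f_p = p / (s - (1 - p))` with it is then the same as comparing `u (φ - K) / K` with `s - (1 - p)`.
-/

namespace Real

lemma sqrt_div_eq_div_two_mul_sqrt {c A φ : ℝ} (hcA : 0 < c * A) (hφ : 0 < φ) :
    √(φ / (2 * c * A)) = φ / (2 * √(c * φ * A / 2)) := by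
  set K := √(c * φ * A / 2)
  have hK2 : K ^ 2 = c * φ * A / 2 := sq_sqrt (by nlinarith)
  have hK0 : 0 < K := sqrt_pos.mpr (by nlinarith)
  have hc : c ≠ 0 := left_ne_zero_of_mul hcA.ne'
  have hA : A ≠ 0 := right_ne_zero_of_mul hcA.ne'
  rw [show φ / (2 * c * A) = (φ / (2 * K)) ^ 2 by
    field_simp
    linear_combination 2 * hK2]
  exact sqrt_sq (by positivity)

end Real

lemma payoff_sub_benchmark (φ p q K s : ℝ) :
    φ * (p + (1 - p) * q) + (1 - p) * (1 - q) * K - (p * φ + s * K)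
      = (1 - p) * q * (φ - K) - (s - (1 - p)) * K := by
  ring

/-- Case (3) benefit condition: the policy q₃* beats the no-signaling benchmark
iff f_p > (1/2)√(φ/(2cA_ℓ))·(φ − 2cA_ℓ)/(φ − K). -/
theorem stmt_15 (Al φ p c : ℝ) (hAl : 0 < Al) (hφ : 0 < φ)
    (hp0 : 0 < p) (hp1 : p < 1) (hc0 : 0 < c) (hc : 2 * c * Al < φ)
    (K : ℝ) (hK : K = Real.sqrt (c * φ * Al / 2))
    (q₃ : ℝ) (hq₃ : q₃ = (p / (1 - p)) * (2 * c * Al) / (φ - 2 * c * Al))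
    (fp : ℝ) (hfp : fp = p / (Real.sqrt (1 - p) - (1 - p))) :
    (p * φ + Real.sqrt (1 - p) * K
        < φ * (p + (1 - p) * q₃) + (1 - p) * (1 - q₃) * K)
      ↔ (1 / 2) * Real.sqrt (φ / (2 * c * Al)) * ((φ - 2 * c * Al) / (φ - K))
          < fp := by
  have hcA : 0 < c * Al := by positivity
  have hK2 : K ^ 2 = c * φ * Al / 2 := by rw [hK]; exact Real.sq_sqrt (by positivity)
  have hK0 : 0 < K := hK ▸ Real.sqrt_pos.mpr (by positivity)
  have hφK : 0 < φ - K := by nlinarith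
  have hgap : 0 < Real.sqrt (1 - p) - (1 - p) :=
    sub_pos.mpr (Real.lt_sqrt_self_iff.mpr ⟨by linarith, by linarith⟩)
  have hu : 0 < (1 - p) * q₃ := by
    rw [hq₃]
    have : 0 < 1 - p := by linarith
    have : 0 < φ - 2 * c * Al := by linarith
    positivity
  have hthreshold : (1 / 2) * Real.sqrt (φ / (2 * c * Al)) * ((φ - 2 * c * Al) / (φ - K))
      = p / ((1 - p) * q₃ * (φ - K) / K) := by
    have h1p : 1 - p ≠ 0 := by linarith
    have hD : φ - 2 * c * Al ≠ 0 := by linarith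
    rw [Real.sqrt_div_eq_div_two_mul_sqrt hcA hφ, ← hK, hq₃]
    field_simp
    linear_combination -2 * hK2
  rw [← sub_pos, payoff_sub_benchmark, sub_pos, hthreshold, hfp,
    div_lt_div_iff_of_pos_left hp0 (by positivity) hgap, lt_div_iff₀ hK0]
end

section
/- Let A_ℓ > 0, φ > 0, let f > 1 be a real number, and let c satisfy 0 < c < φ/(2A_ℓ). Then f > (1/2)·√(φ/(2c·A_ℓ)) · (φ − 2c·A_ℓ)/(φ − √(c·φ·A_ℓ/2)) holds if and only if c > (φ/(2A_ℓ))·((f − √(f² − f + 1))/(f − 1))². Moreover, the larger root r₊ := φ·(f + √(f² − f + 1))/((f − 1)·√(2φA_ℓ)) of the associated quadratic in √c satisfies r₊² > φ/(2A_ℓ). -/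
set_option maxHeartbeats 1000000 in
/-- Solution of the case-(3) benefit condition in c via the roots of a quadratic
in √c, together with the fact that the larger root exceeds φ/(2A_ℓ). -/
theorem stmt_16 (Al φ f c : ℝ) (hAl : 0 < Al) (hφ : 0 < φ) (hf : 1 < f)
    (hc0 : 0 < c) (hc1 : c < φ / (2 * Al)) :
    ((1 / 2) * Real.sqrt (φ / (2 * c * Al))
        * ((φ - 2 * c * Al) / (φ - Real.sqrt (c * φ * Al / 2))) < f
      ↔ (φ / (2 * Al)) * ((f - Real.sqrt (f ^ 2 - f + 1)) / (f - 1)) ^ 2 < c) ∧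
    φ / (2 * Al) <
      (φ * (f + Real.sqrt (f ^ 2 - f + 1))
        / ((f - 1) * Real.sqrt (2 * φ * Al))) ^ 2 := by
  have hf0 : 0 < f - 1 := by linarith
  have hD0 : (0:ℝ) < f ^ 2 - f + 1 := by nlinarith
  set d := Real.sqrt (f ^ 2 - f + 1) with hdd
  have hd2 : d ^ 2 = f ^ 2 - f + 1 := Real.sq_sqrt hD0.le
  have hd0 : 0 < d := Real.sqrt_pos.mpr hD0
  have hd1 : 1 < d := by nlinarith
  have hdf : d < f := by nlinarith
  -- u = sqrt(2 c Al / φ)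
  have hu0 : (0:ℝ) < 2 * c * Al / φ := by positivity
  set u := Real.sqrt (2 * c * Al / φ) with huu
  have hu2 : u ^ 2 = 2 * c * Al / φ := Real.sq_sqrt hu0.le
  have hup : 0 < u := Real.sqrt_pos.mpr hu0
  have h2cAl : 2 * c * Al = φ * u ^ 2 := by
    rw [hu2]; field_simp
  have hcAl : c * (2 * Al) < φ := (lt_div_iff₀ (by positivity)).mp hc1
  have hu2lt : u ^ 2 < 1 := by
    rw [hu2, div_lt_one hφ]; linarith
  have hul : u < 1 := by nlinarith
  have hcu : c = φ * u ^ 2 / (2 * Al) := by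
    field_simp; linarith [h2cAl]
  have hsqrt1 : Real.sqrt (φ / (2 * c * Al)) = 1 / u := by
    have h1 : φ / (2 * c * Al) = (1 / u) ^ 2 := by
      rw [h2cAl]
      field_simp
    rw [h1, Real.sqrt_sq (by positivity)]
  have hsqrt2 : Real.sqrt (c * φ * Al / 2) = φ * u / 2 := by
    have h1 : c * φ * Al / 2 = (φ * u / 2) ^ 2 := by
      nlinarith [h2cAl]
    rw [h1, Real.sqrt_sq (by positivity)]
  have hden : 0 < φ - φ * u / 2 := by nlinarith
  have hLeq : (1 / 2) * Real.sqrt (φ / (2 * c * Al))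
        * ((φ - 2 * c * Al) / (φ - Real.sqrt (c * φ * Al / 2)))
      = (φ - φ * u ^ 2) / (2 * u * (φ - φ * u / 2)) := by
    rw [hsqrt1, hsqrt2, h2cAl]
    field_simp
  have hdenpos : 0 < 2 * u * (φ - φ * u / 2) := by positivity
  constructor; constructor
  · -- forward
    intro h
    rw [hLeq, div_lt_iff₀ hdenpos] at h
    have hQ : (f - 1) * u ^ 2 - 2 * f * u + 1 < 0 := by nlinarith
    have hru : (f - d) / (f - 1) < u := by
      rw [div_lt_iff₀ hf0]
      by_contra hcon
      push_neg at hcon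
      have hy : d ≤ f - (f - 1) * u := by linarith
      have hsq : d * d ≤ (f - (f - 1) * u) * (f - (f - 1) * u) :=
        mul_le_mul hy hy hd0.le (by linarith)
      nlinarith [hQ, hd2, hsq]
    have hr0 : 0 ≤ (f - d) / (f - 1) := div_nonneg (by linarith) hf0.le
    have this : ((f - d) / (f - 1)) ^ 2 < u ^ 2 := by nlinarith [hru, hr0, hup]
    calc φ / (2 * Al) * ((f - d) / (f - 1)) ^ 2
        < φ / (2 * Al) * u ^ 2 := by
          apply mul_lt_mul_of_pos_left this (by positivity)
      _ = c := by rw [hcu]; ring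
  · -- backward
    intro h
    have hu2gt : ((f - d) / (f - 1)) ^ 2 < u ^ 2 := by
      rw [hcu] at h
      have h2 : φ / (2 * Al) * ((f - d) / (f - 1)) ^ 2 < φ / (2 * Al) * u ^ 2 := by
        calc φ / (2 * Al) * ((f - d) / (f - 1)) ^ 2 < φ * u ^ 2 / (2 * Al) := h
          _ = φ / (2 * Al) * u ^ 2 := by ring
      exact lt_of_mul_lt_mul_left h2 (by positivity)
    have hru : (f - d) / (f - 1) < u :=
      lt_of_pow_lt_pow_left₀ 2 hup.le hu2gt
    have hru' : f - d < u * (f - 1) := by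
      rw [div_lt_iff₀ hf0] at hru; linarith
    have hy1 : f - (f - 1) * u < d := by linarith
    have hy0 : 0 < f - (f - 1) * u := by nlinarith
    have hsq : (f - (f - 1) * u) * (f - (f - 1) * u) < d * d :=
      mul_lt_mul' hy1.le hy1 hy0.le hd0
    have hQ : (f - 1) * u ^ 2 - 2 * f * u + 1 < 0 := by nlinarith [hd2, hsq]
    rw [hLeq, div_lt_iff₀ hdenpos]
    have := mul_neg_of_pos_of_neg hφ hQ
    nlinarith [this]
  · -- larger root
    have hw0 : (0:ℝ) < 2 * φ * Al := by positivity
    have hw2 : Real.sqrt (2 * φ * Al) ^ 2 = 2 * φ * Al := Real.sq_sqrt hw0.le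
    have hwp : 0 < Real.sqrt (2 * φ * Al) := Real.sqrt_pos.mpr hw0
    have heq : (φ * (f + d) / ((f - 1) * Real.sqrt (2 * φ * Al))) ^ 2
        = φ * (f + d) ^ 2 / ((f - 1) ^ 2 * (2 * Al)) := by
      rw [div_pow, mul_pow, mul_pow, hw2]
      field_simp
    rw [heq]
    rw [div_lt_div_iff₀ (by positivity) (by positivity)]
    nlinarith [mul_pos (mul_pos hφ hAl)
      (mul_pos (by linarith : (0:ℝ) < 2 * f + d - 1) (by linarith : (0:ℝ) < d + 1))]
end

section
/- Let A_h > A_ℓ > 0 and φ > 0, and set c := φ/(2A_h). Then the ratio (p·φ + (1−p)·√(c·φ·A_ℓ/2)) / √(c·φ·(p·A_h + (1−p)·A_ℓ)/2) tends to 2 as p tends to 1 from below; that is, at this cost level the optimal signaling policy's payoff approaches twice the no-signaling benchmark payoff. -/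
/-!
Both payoffs are continuous in `p` near `p = 1`. At `p = 1` player A earns the whole value `φ`,
while the benchmark is `√(c φ A_h / 2)`, which equals `φ / 2` exactly because `c = φ / (2 A_h)`;
the ratio therefore tends to `φ / (φ / 2) = 2`.
-/

open Filter Topology

lemma sqrt_cost_mul_value_mul_budget {A φ c : ℝ} (hA : A ≠ 0) (hφ : 0 ≤ φ)
    (hc : c = φ / (2 * A)) : Real.sqrt (c * φ * A / 2) = φ / 2 := by
  rw [← Real.sqrt_sq (div_nonneg hφ zero_le_two), hc]
  congr 1
  field_simp

/-- At cost c = φ/(2A_h), the ratio of the optimal signaling payoff to the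
no-signaling benchmark tends to 2 as p → 1⁻. -/
theorem stmt_17 (Ah Al φ : ℝ) (hAl : 0 < Al) (hAh : Al < Ah) (hφ : 0 < φ)
    (c : ℝ) (hc : c = φ / (2 * Ah)) :
    Tendsto
      (fun p : ℝ =>
        (p * φ + (1 - p) * Real.sqrt (c * φ * Al / 2))
          / Real.sqrt (c * φ * (p * Ah + (1 - p) * Al) / 2))
      (nhdsWithin 1 (Set.Iio 1)) (nhds 2) := by
  have hbench : Real.sqrt (c * φ * (1 * Ah + (1 - 1) * Al) / 2) = φ / 2 := by
    simpa using sqrt_cost_mul_value_mul_budget (hAl.trans hAh).ne' hφ.le hc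
  rw [show 𝓝 (2 : ℝ) = 𝓝 (φ / (φ / 2)) by field_simp]
  apply tendsto_nhdsWithin_of_tendsto_nhds
  refine Tendsto.div ?_ ?_ (by positivity)
  · exact Continuous.tendsto' (by fun_prop) _ _ (by simp)
  · exact Continuous.tendsto' (by fun_prop) _ _ hbench
end
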